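/- arXiv:1409.7163 — 3 statements merged into one kernel-verified Lean document; each statement's English description precedes it below -/
import Mathlib

section
/- Let n_t, n_r, B, M be positive integers, R ∈ (0, n_t·M), u a positive integer, δ ≥ 0. Set d_S = 1 + ⌊B(n_t − R/M)⌋ and b̂ = ⌊d_S/n_t⌋, and define a_b = 1 for 1 ≤ b ≤ u and a_b = a_{b−1} + n_t·n_r·min(δ, a_{b−u}) for u+1 ≤ b ≤ b̂+1. Then the diversity d(R,δ) = n_r·n_t·∑_{b=1}^{b̂} a_b + n_r·(d_S − b̂·n_t)·a_{b̂+1} satisfies d(R,δ) ≥ n_r·d_S, with equality if and only if d_S ≤ u·n_t or δ = 0. -/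
/-- Theorem 3 recursion: `a_b = 1` for `b ≤ u`, `a_b = a_{b−1} + c·min(δ, a_{b−u})`
for `b > u`, with `c = n_t·n_r`. -/
noncomputable def aT3 (u : ℕ) (c δ : ℝ) : ℕ → ℝ
  | 0 => 1
  | b + 1 =>
    if b + 1 ≤ u then 1
    else aT3 u c δ b + c * min δ (aT3 u c δ (b - (u - 1)))
termination_by b => b
decreasing_by all_goals omega

/-- Singleton-bound diversity `d_S(R) = 1 + ⌊B (n_t − R/M)⌋`. -/
noncomputable def dS (B nt M : ℕ) (R : ℝ) : ℤ := 1 + ⌊(B : ℝ) * (nt - R / M)⌋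

/-- `b̂ = ⌊d_S/n_t⌋`. -/
noncomputable def bhat (B nt M : ℕ) (R : ℝ) : ℕ := (dS B nt M R).toNat / nt

/-- Theorem 3: optimal rate-diversity tradeoff of the MIMO block-fading channel with
causal mismatched CSIT of delay `u` and quality exponent `δ`:
`d(R,δ) = n_r·n_t·∑_{b=1}^{b̂} a_b + n_r·(d_S − b̂·n_t)·a_{b̂+1}`. -/
noncomputable def dCausal (nt nr B M u : ℕ) (R δ : ℝ) : ℝ :=
  nr * nt * (∑ b ∈ Finset.Icc 1 (bhat B nt M R), aT3 u ((nt : ℝ) * nr) δ b) +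
    nr * ((dS B nt M R : ℝ) - (bhat B nt M R : ℝ) * nt) *
      aT3 u ((nt : ℝ) * nr) δ (bhat B nt M R + 1)

lemma aT3_of_le {u b : ℕ} (c δ : ℝ) (hb : b ≤ u) : aT3 u c δ b = 1 := by
  cases b with
  | zero => simp [aT3]
  | succ b => simp [aT3, hb]

lemma aT3_one_le {u : ℕ} {c δ : ℝ} (hc : 0 ≤ c) (hδ : 0 ≤ δ) :
    ∀ b, 1 ≤ aT3 u c δ b := by
  intro b
  induction b using Nat.strong_induction_on with
  | _ b ih =>
    cases b with
    | zero => simp [aT3]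
    | succ b =>
      by_cases h : b + 1 ≤ u
      · simp [aT3, h]
      · rw [aT3]; simp only [h, if_false]
        have h1 := ih b (by omega)
        have h2 := ih (b - (u - 1)) (by omega)
        have : 0 ≤ min δ (aT3 u c δ (b - (u - 1))) := le_min hδ (by linarith)
        nlinarith

lemma aT3_mono {u : ℕ} {c δ : ℝ} (hc : 0 ≤ c) (hδ : 0 ≤ δ) :
    Monotone (aT3 u c δ) := by
  apply monotone_nat_of_le_succ
  intro b
  by_cases h : b + 1 ≤ u
  · rw [aT3_of_le c δ h, aT3_of_le c δ (by omega)]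
  · rw [aT3]; simp only [h, if_false]
    have h2 := aT3_one_le hc hδ (u := u) (b - (u - 1))
    have : 0 ≤ min δ (aT3 u c δ (b - (u - 1))) := le_min hδ (by linarith)
    nlinarith

lemma aT3_delta_zero {u : ℕ} (c : ℝ) : ∀ b, aT3 u c 0 b = 1 := by
  intro b
  induction b using Nat.strong_induction_on with
  | _ b ih =>
    cases b with
    | zero => simp [aT3]
    | succ b =>
      by_cases h : b + 1 ≤ u
      · simp [aT3, h]
      · rw [aT3]; simp only [h, if_false]
        rw [ih b (by omega), ih (b - (u - 1)) (by omega)]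
        simp

lemma aT3_gt_one {u b : ℕ} {c δ : ℝ} (hc : 0 < c) (hδ : 0 < δ) (hu : 1 ≤ u)
    (hb : u < b) : 1 < aT3 u c δ b := by
  have key : 1 < aT3 u c δ (u + 1) := by
    rw [aT3]
    have h : ¬ (u + 1 ≤ u) := by omega
    simp only [h, if_false]
    have h1 : u - (u - 1) = 1 := by omega
    rw [h1, aT3_of_le c δ hu, aT3_of_le c δ (le_refl u)]
    have : 0 < min δ 1 := lt_min hδ one_pos
    nlinarith
  exact lt_of_lt_of_le key (aT3_mono hc.le hδ.le (by omega : u + 1 ≤ b))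

set_option maxHeartbeats 1000000 in
/-- Theorem 3 diversity dominates the no-CSIT Singleton-bound diversity `n_r·d_S`,
with equality if and only if `d_S ≤ u·n_t` or `δ = 0`. -/
theorem dCausal_ge_singleton (nt nr B M u : ℕ)
    (hnt : 0 < nt) (hnr : 0 < nr) (hB : 0 < B) (hM : 0 < M) (hu : 1 ≤ u)
    (R δ : ℝ) (hR0 : 0 < R) (hR1 : R < (nt : ℝ) * M) (hδ : 0 ≤ δ) :
    dCausal nt nr B M u R δ ≥ nr * (dS B nt M R : ℝ) ∧
    (dCausal nt nr B M u R δ = nr * (dS B nt M R : ℝ) ↔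
      dS B nt M R ≤ (u : ℤ) * nt ∨ δ = 0) := by
  set c : ℝ := (nt : ℝ) * nr with hcdef
  have hc : 0 < c := by positivity
  set s : ℤ := dS B nt M R with hsdef
  have hs1 : 1 ≤ s := by
    rw [hsdef, dS]
    have h1 : R / M < nt := by
      rw [div_lt_iff₀ (by positivity : (0:ℝ) < M)]; linarith
    have h2 : 0 ≤ (B : ℝ) * (nt - R / M) := by
      apply mul_nonneg (by positivity); linarith
    have := Int.floor_nonneg.2 h2
    omega
  set bh : ℕ := bhat B nt M R with hbhdef
  set m : ℕ := s.toNat % nt with hmdef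
  have hts : (s.toNat : ℤ) = s := Int.toNat_of_nonneg (by omega)
  have hdm : nt * bh + m = s.toNat := by
    rw [hbhdef, hmdef, bhat, ← hsdef]; exact Nat.div_add_mod _ _
  have hmlt : m < nt := Nat.mod_lt _ hnt
  have hsr : (s : ℝ) = (nt : ℝ) * bh + m := by
    rw [← hts]; push_cast [← hdm]; ring
  set A : ℝ := aT3 u c δ (bh + 1) with hAdef
  set S : ℝ := ∑ b ∈ Finset.Icc 1 bh, aT3 u c δ b with hSdef
  have hA1 : 1 ≤ A := aT3_one_le hc.le hδ _
  have hcard : ∑ _b ∈ Finset.Icc 1 bh, (1:ℝ) = bh := by simp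
  have hS : (bh : ℝ) ≤ S := by
    rw [hSdef, ← hcard]
    exact Finset.sum_le_sum fun i _ => aT3_one_le hc.le hδ i
  have hcoeff : (s : ℝ) - (bh : ℝ) * nt = m := by rw [hsr]; ring
  have hcoeff0 : (0:ℝ) ≤ (s : ℝ) - (bh : ℝ) * nt := by rw [hcoeff]; positivity
  have hd : dCausal nt nr B M u R δ =
      (nr : ℝ) * nt * S + nr * ((s : ℝ) - (bh : ℝ) * nt) * A := by
    rw [dCausal]
  clear_value S A m bh s c
  have hnr' : (0:ℝ) < nr := by positivity
  have hnt' : (0:ℝ) < nt := by positivity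
  have hnrs : (nr : ℝ) * s = nr * ((nt : ℝ) * bh) + nr * m := by rw [hsr]; ring
  have t1 : (0:ℝ) ≤ nr * nt * (S - bh) :=
    mul_nonneg (by positivity) (by linarith)
  have t2 : (0:ℝ) ≤ nr * ((s : ℝ) - (bh : ℝ) * nt) * (A - 1) :=
    mul_nonneg (mul_nonneg hnr'.le hcoeff0) (by linarith)
  constructor
  · rw [hd]
    linarith [t1, t2, hnrs]
  constructor
  · -- equality → condition
    intro heq
    by_contra hcon
    push_neg at hcon
    obtain ⟨hsgt, hδne⟩ := hcon
    have hδpos : 0 < δ := lt_of_le_of_ne hδ (Ne.symm hδne)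
    have hugt : u * nt < s.toNat := by
      rw [← hts] at hsgt; exact_mod_cast hsgt
    have hule : u ≤ bh := by
      by_contra h
      push_neg at h
      have hstep : nt * bh + nt ≤ nt * u := by
        linarith [Nat.mul_le_mul_left nt (show bh + 1 ≤ u by omega)]
      have hcomm : u * nt = nt * u := Nat.mul_comm _ _
      omega
    rw [hd] at heq
    rcases lt_or_eq_of_le hule with h | h
    · -- u < bh : strict sum
      have hmem : u + 1 ∈ Finset.Icc 1 bh := by
        rw [Finset.mem_Icc]; omega
      have hstrict : (bh : ℝ) < S := by
        rw [hSdef, ← hcard]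
        exact Finset.sum_lt_sum
          (fun i _ => aT3_one_le hc.le hδ i)
          ⟨u + 1, hmem, aT3_gt_one hc hδpos hu (by omega)⟩
      have t1' : (0:ℝ) < nr * nt * (S - bh) :=
        mul_pos (by positivity) (by linarith)
      linarith [t1', t2, hnrs]
    · -- u = bh : coeff > 0 and A > 1
      have hm1 : 1 ≤ m := by
        rw [← h] at hdm
        have hcomm : u * nt = nt * u := Nat.mul_comm _ _
        omega
      have hApos : 1 < A := hAdef ▸ aT3_gt_one hc hδpos hu (show u < bh + 1 by omega)
      have hcpos : (0:ℝ) < (s : ℝ) - (bh : ℝ) * nt := by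
        rw [hcoeff]; exact_mod_cast hm1
      have t2' : (0:ℝ) < nr * ((s : ℝ) - (bh : ℝ) * nt) * (A - 1) :=
        mul_pos (mul_pos hnr' hcpos) (by linarith)
      linarith [t1, t2', hnrs]
  · -- condition → equality
    rintro (hle | rfl)
    · -- s ≤ u * nt
      have hstle : s.toNat ≤ u * nt := by
        rw [← hts] at hle; exact_mod_cast hle
      have hbhu : bh ≤ u := by
        by_contra h
        push_neg at h
        have hstep : nt * u + nt ≤ nt * bh := by
          linarith [Nat.mul_le_mul_left nt (show u + 1 ≤ bh by omega)]
        have hcomm : u * nt = nt * u := Nat.mul_comm _ _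
        omega
      have hSeq : S = bh := by
        rw [hSdef,
          Finset.sum_congr rfl (fun i hi => aT3_of_le c δ
            (le_trans (Finset.mem_Icc.mp hi).2 hbhu))]
        exact hcard
      have hcA : (nr : ℝ) * ((s : ℝ) - (bh : ℝ) * nt) * A =
          nr * ((s : ℝ) - (bh : ℝ) * nt) := by
        rcases lt_or_eq_of_le hbhu with h | h
        · rw [hAdef, aT3_of_le c δ (by omega : bh + 1 ≤ u)]; ring
        · have hm0 : m = 0 := by
            subst h
            have hcomm : bh * nt = nt * bh := Nat.mul_comm _ _
            omega
          have hz : (s : ℝ) - (bh : ℝ) * nt = 0 := by rw [hcoeff, hm0]; simp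
          rw [hz]; ring
      rw [hd, hSeq, hcA, hsr]; ring
    · -- δ = 0
      have hSeq : S = bh := by
        rw [hSdef, Finset.sum_congr rfl (fun i _ => aT3_delta_zero c i)]
        exact hcard
      have hAeq : A = 1 := hAdef.trans (aT3_delta_zero c _)
      rw [hd, hSeq, hAeq, hsr]; ring
end

section
/- With d(R,δ) from Theorem 4 (predictive CSIT with t ≥ 0 future blocks), for fixed R and t, d(R,δ) is strictly increasing in δ for δ ≥ 0 (when d_S ≥ 1), and d(R,δ) → ∞ as δ → ∞. -/
/-- Theorem 4: optimal rate-diversity tradeoff of the MIMO block-fading channel with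
predictive mismatched CSIT covering `t` future blocks with quality exponent `δ`. -/
noncomputable def dPred (nt nr B M t : ℕ) (R δ : ℝ) : ℝ :=
  if bhat B nt M R ≤ t then
    nr * (dS B nt M R : ℝ) * (1 + nr * (dS B nt M R : ℝ) * δ)
  else
    nr * ((dS B nt M R : ℝ) + nr * δ *
      ((((bhat B nt M R : ℝ) - t) * ((bhat B nt M R : ℝ) + t + 1) / 2) * nt ^ 2 +
        (dS B nt M R : ℝ) * ((dS B nt M R : ℝ) - nt * ((bhat B nt M R : ℝ) - t))))

lemma aux_tendsto (a c : ℝ) (hc : 0 < c) :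
    Filter.Tendsto (fun δ : ℝ => a + c * δ) Filter.atTop Filter.atTop :=
  Filter.tendsto_atTop_add_const_left _ a (Filter.Tendsto.const_mul_atTop hc Filter.tendsto_id)

/-- For fixed rate `R` and number of predicted blocks `t`, the Theorem 4 predictive-CSIT
diversity is strictly increasing in `δ ≥ 0` (given `d_S ≥ 1`), and tends to infinity
as `δ → ∞`. -/
theorem dPred_strictMono_and_tendsto (nt nr B M t : ℕ)
    (hnt : 0 < nt) (hnr : 0 < nr) (hB : 0 < B) (hM : 0 < M)
    (R : ℝ) (hR0 : 0 < R) (hR1 : R < (nt : ℝ) * M) (hds : 1 ≤ dS B nt M R) :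
    (∀ δ₁ δ₂ : ℝ, 0 ≤ δ₁ → δ₁ < δ₂ → dPred nt nr B M t R δ₁ < dPred nt nr B M t R δ₂) ∧
    Filter.Tendsto (fun δ : ℝ => dPred nt nr B M t R δ) Filter.atTop Filter.atTop := by
  set D : ℝ := (dS B nt M R : ℝ) with hD
  have hD1 : (1 : ℝ) ≤ D := by rw [hD]; exact_mod_cast hds
  have hnr1 : (1 : ℝ) ≤ (nr : ℝ) := by exact_mod_cast hnr
  have hnt1 : (1 : ℝ) ≤ (nt : ℝ) := by exact_mod_cast hnt
  set b : ℕ := bhat B nt M R with hb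
  by_cases hcase : b ≤ t
  · -- slope c = nr^2 * D^2
    have hc : (0 : ℝ) < nr * D * (nr * D) := by positivity
    constructor
    · intro δ₁ δ₂ h1 h2
      simp only [dPred, ← hb, if_pos hcase]
      nlinarith
    · have := aux_tendsto (nr * D) (nr * D * (nr * D)) hc
      refine this.congr (fun δ => ?_)
      simp only [dPred, ← hb, if_pos hcase]
      ring
  · -- b > t
    have hbt : t + 1 ≤ b := Nat.succ_le_of_lt (Nat.lt_of_not_le hcase)
    have hbt' : (t : ℝ) + 1 ≤ (b : ℝ) := by exact_mod_cast hbt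
    have hntb : (nt : ℝ) * b ≤ D := by
      have h1 : b * nt ≤ (dS B nt M R).toNat := Nat.div_mul_le_self _ _
      have h0 : (0:ℤ) ≤ dS B nt M R := le_trans zero_le_one hds
      have h2 : (((dS B nt M R).toNat : ℤ) : ℝ) = D := by
        rw [hD, Int.toNat_of_nonneg h0]
      calc (nt:ℝ) * b = ((b * nt : ℕ) : ℝ) := by push_cast; ring
        _ ≤ (((dS B nt M R).toNat : ℤ) : ℝ) := by exact_mod_cast h1
        _ = D := h2
    set K : ℝ := (((b : ℝ) - t) * ((b : ℝ) + t + 1) / 2) * nt ^ 2 +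
        D * (D - nt * ((b : ℝ) - t)) with hK
    have hKpos : 0 < K := by
      have h1 : (1 : ℝ) ≤ (b : ℝ) - t := by linarith
      have h2 : (0 : ℝ) ≤ D - nt * ((b : ℝ) - t) := by
        have : (nt : ℝ) * ((b:ℝ) - t) ≤ (nt : ℝ) * b := by
          have ht0 : (0:ℝ) ≤ t := Nat.cast_nonneg t
          nlinarith
        linarith
      have ht0 : (0:ℝ) ≤ t := Nat.cast_nonneg t
      have h3 : (0 : ℝ) < ((b : ℝ) - t) * ((b : ℝ) + t + 1) / 2 * nt ^ 2 :=
        mul_pos (div_pos (mul_pos (by linarith) (by linarith)) two_pos) (by positivity)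
      have h4 : (0:ℝ) ≤ D * (D - nt * ((b : ℝ) - t)) := mul_nonneg (by linarith) h2
      rw [hK]; linarith
    have hc : (0 : ℝ) < nr * (nr * K) := by positivity
    constructor
    · intro δ₁ δ₂ h1 h2
      simp only [dPred, ← hb, if_neg hcase, ← hD, ← hK]
      nlinarith
    · have := aux_tendsto (nr * D) (nr * (nr * K)) hc
      refine this.congr (fun δ => ?_)
      simp only [dPred, ← hb, if_neg hcase, ← hD, ← hK]
      ring
end

section
/- In the infimum of equation (34) for the case B − u − B·r > 0: the assignment a_b = 0 for b ≤ ⌊B·r⌋, a_{⌊B·r⌋+1} = 1 − B·r + ⌊B·r⌋, and a_b = p_b(a) for b ≥ ⌊B·r⌋+2, where p_b(a) = 1 + m·∑_{b'=1}^{b−u} min(a_{b'}, δ), is feasible: it satisfies 0 ≤ a_b ≤ p_b(a) for all b and ∑_{b=1}^{B} a_b ≥ ∑_{b=1}^{B} p_b(a) − B·r (with the inequality approached with equality in the relaxed sense used for the infimum). -/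
/-- Normalised power levels `p_b(a) = 1 + m·∑_{b'=1}^{b−u} min(a_{b'}, δ)`
(the sum is empty for `b ≤ u`). -/
noncomputable def pPow (u m : ℕ) (δ : ℝ) (a : ℕ → ℝ) (b : ℕ) : ℝ :=
  1 + m * ∑ b' ∈ Finset.Icc 1 (b - u), min (a b') δ

/-- Feasibility of the candidate optimizer of equation (34) in the case
`B − u − B·r > 0`: the assignment `a_b = 0` for `b ≤ ⌊B·r⌋`,
`a_{⌊B·r⌋+1} = 1 − B·r + ⌊B·r⌋`, and `a_b = p_b(a)` for `b ≥ ⌊B·r⌋+2`, satisfies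
`0 ≤ a_b ≤ p_b(a)` for all `b`, and `∑_{b=1}^{B} a_b ≥ ∑_{b=1}^{B} p_b(a) − B·r`. -/
theorem candidate_feasible (B u m : ℕ) (hB : 0 < B) (hu : 1 ≤ u) (hm : 1 ≤ m)
    (r δ : ℝ) (hr0 : 0 ≤ r) (hr1 : r ≤ 1) (hδ : 0 ≤ δ)
    (hcase : (B : ℝ) - u - B * r > 0)
    (a : ℕ → ℝ)
    (h0 : ∀ b : ℕ, 1 ≤ b → b ≤ (⌊(B : ℝ) * r⌋).toNat → a b = 0)
    (h1 : a ((⌊(B : ℝ) * r⌋).toNat + 1) = 1 - B * r + ⌊(B : ℝ) * r⌋)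
    (h2 : ∀ b : ℕ, (⌊(B : ℝ) * r⌋).toNat + 2 ≤ b → b ≤ B → a b = pPow u m δ a b) :
    (∀ b ∈ Finset.Icc 1 B, 0 ≤ a b ∧ a b ≤ pPow u m δ a b) ∧
    ∑ b ∈ Finset.Icc 1 B, a b ≥ (∑ b ∈ Finset.Icc 1 B, pPow u m δ a b) - B * r := by
  set k := (⌊(B : ℝ) * r⌋).toNat with hkdef
  have hBr0 : (0:ℝ) ≤ B * r := mul_nonneg (Nat.cast_nonneg B) hr0
  have hfl : ((k : ℕ) : ℤ) = ⌊(B : ℝ) * r⌋ :=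
    Int.toNat_of_nonneg (Int.floor_nonneg.mpr hBr0)
  have hkR : ((k : ℕ) : ℝ) = (⌊(B : ℝ) * r⌋ : ℝ) := by exact_mod_cast hfl
  have hkBr : ((k : ℕ) : ℝ) ≤ B * r := by rw [hkR]; exact Int.floor_le _
  have hu' : (1:ℝ) ≤ u := by exact_mod_cast hu
  have hk1B : k + 1 < B := by
    have h1' : ((k:ℕ):ℝ) + 1 < B := by linarith
    exact_mod_cast h1'
  have pone : ∀ b, b ≤ k + 1 → pPow u m δ a b = 1 := by
    intro b hb
    unfold pPow
    rw [Finset.sum_eq_zero, mul_zero, add_zero]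
    intro b' hb'
    rw [Finset.mem_Icc] at hb'
    rw [h0 b' hb'.1 (by omega)]
    exact min_eq_left hδ
  have hnn : ∀ b, 1 ≤ b → b ≤ B → 0 ≤ a b := by
    intro b
    induction b using Nat.strong_induction_on with
    | _ b ih =>
      intro hb1 hbB
      by_cases hbk : b ≤ k
      · rw [h0 b hb1 hbk]
      · by_cases hbk1 : b = k + 1
        · subst hbk1
          rw [h1]
          have := Int.sub_one_lt_floor ((B : ℝ) * r)
          linarith
        · have hb2 : k + 2 ≤ b := by omega
          rw [h2 b hb2 hbB]
          unfold pPow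
          have hS : 0 ≤ ∑ b' ∈ Finset.Icc 1 (b - u), min (a b') δ := by
            apply Finset.sum_nonneg
            intro b' hb'
            rw [Finset.mem_Icc] at hb'
            exact le_min (ih b' (by omega) hb'.1 (by omega)) hδ
          have hmS : 0 ≤ (m:ℝ) * ∑ b' ∈ Finset.Icc 1 (b - u), min (a b') δ :=
            mul_nonneg (Nat.cast_nonneg m) hS
          linarith
  constructor
  · intro b hb
    rw [Finset.mem_Icc] at hb
    refine ⟨hnn b hb.1 hb.2, ?_⟩
    by_cases hbk1 : b ≤ k + 1
    · rw [pone b hbk1]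
      by_cases hbk : b ≤ k
      · rw [h0 b hb.1 hbk]; norm_num
      · have hbe : b = k + 1 := by omega
        subst hbe
        rw [h1]
        have := Int.floor_le ((B : ℝ) * r)
        linarith
    · rw [h2 b (by omega) hb.2]
  · have hsplit : ∀ f : ℕ → ℝ, ∑ b ∈ Finset.Icc 1 B, f b =
        ∑ b ∈ Finset.Ioc 0 (k+1), f b + ∑ b ∈ Finset.Ioc (k+1) B, f b := by
      intro f
      have hIcc : Finset.Icc 1 B = Finset.Ioc 0 B := by
        ext x; simp [Finset.mem_Icc, Finset.mem_Ioc]; omega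
      rw [hIcc, ← Finset.sum_Ioc_consecutive f (Nat.zero_le (k+1)) hk1B.le]
    have ha1 : ∑ b ∈ Finset.Ioc 0 (k+1), a b = 1 - B * r + ⌊(B : ℝ) * r⌋ := by
      rw [Finset.sum_eq_single_of_mem (k+1) (by simp [Finset.mem_Ioc])
        (fun b hb hne => by
          rw [Finset.mem_Ioc] at hb
          exact h0 b hb.1 (by omega)), h1]
    have hp1 : ∑ b ∈ Finset.Ioc 0 (k+1), pPow u m δ a b = (k:ℝ) + 1 := by
      rw [Finset.sum_congr rfl (fun b hb => pone b (Finset.mem_Ioc.mp hb).2)]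
      rw [Finset.sum_const, Nat.card_Ioc]
      push_cast
      ring
    have ha2 : ∑ b ∈ Finset.Ioc (k+1) B, a b
        = ∑ b ∈ Finset.Ioc (k+1) B, pPow u m δ a b := by
      refine Finset.sum_congr rfl (fun b hb => ?_)
      rw [Finset.mem_Ioc] at hb
      exact h2 b (by omega) hb.2
    rw [hsplit a, hsplit (pPow u m δ a), ha1, hp1, ha2]
    linarith
end
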